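/- Fix modal formulas φ and ψ. The formula φ ∧ ¬ψ is satisfiable (true at some world of some Kripke model) if and only if there exists a quasi-model X containing a type τ = (τL, τR) with nnf(φ) ∈ τL and nnf(¬ψ) ∈ τR. (Soundness and completeness of quasi-models.) -/

import Mathlib

inductive ModalFormula (α : Type) : Type
  | atom : α → ModalFormula α
  | top  : ModalFormula α
  | bot  : ModalFormula α
  | neg  : ModalFormula α → ModalFormula α
  | or   : ModalFormula α → ModalFormula α → ModalFormula α
  | and  : ModalFormula α → ModalFormula α → ModalFormula α
  | dia  : ModalFormula α → ModalFormula α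
  | box  : ModalFormula α → ModalFormula α

structure KripkeModel (α : Type) where
  World : Type
  R : World → World → Prop
  V : α → Set World

def Satisfies {α : Type} (M : KripkeModel α) : M.World → ModalFormula α → Prop
  | w, .atom p  => w ∈ M.V p
  | _, .top     => True
  | _, .bot     => False
  | w, .neg φ   => ¬ Satisfies M w φ
  | w, .or φ ψ  => Satisfies M w φ ∨ Satisfies M w ψ
  | w, .and φ ψ => Satisfies M w φ ∧ Satisfies M w ψ
  | w, .dia φ   => ∃ v, M.R w v ∧ Satisfies M v φ
  | w, .box φ   => ∀ v, M.R w v → Satisfies M v φ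

def Valid {α : Type} (φ : ModalFormula α) : Prop :=
  ∀ (M : KripkeModel α) (w : M.World), Satisfies M w φ

def ModalFormula.impl {α : Type} (φ ψ : ModalFormula α) : ModalFormula α :=
  .or (.neg φ) ψ

def sig {α : Type} : ModalFormula α → Set α
  | .atom p  => {p}
  | .top     => ∅
  | .bot     => ∅
  | .neg φ   => sig φ
  | .or φ ψ  => sig φ ∪ sig ψ
  | .and φ ψ => sig φ ∪ sig ψ
  | .dia φ   => sig φ
  | .box φ   => sig φ

def IsBisimulation {α : Type} (τ : Set α) (M M' : KripkeModel α)
    (Z : M.World → M'.World → Prop) : Prop :=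
  ∀ w w', Z w w' →
    (∀ p ∈ τ, (w ∈ M.V p ↔ w' ∈ M'.V p)) ∧
    (∀ v, M.R w v → ∃ v', M'.R w' v' ∧ Z v v') ∧
    (∀ v', M'.R w' v' → ∃ v, M.R w v ∧ Z v v')

def Bisimilar {α : Type} (τ : Set α) (M : KripkeModel α) (w : M.World)
    (M' : KripkeModel α) (w' : M'.World) : Prop :=
  ∃ Z, IsBisimulation τ M M' Z ∧ Z w w'

mutual
  /-- Negation normal form of a modal formula. -/
  def nnf {α : Type} : ModalFormula α → ModalFormula α
    | .atom p  => .atom p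
    | .top     => .top
    | .bot     => .bot
    | .neg φ   => nnfNeg φ
    | .and φ ψ => .and (nnf φ) (nnf ψ)
    | .or φ ψ  => .or (nnf φ) (nnf ψ)
    | .dia φ   => .dia (nnf φ)
    | .box φ   => .box (nnf φ)
  /-- Negation normal form of the negation of a modal formula. -/
  def nnfNeg {α : Type} : ModalFormula α → ModalFormula α
    | .atom p  => .neg (.atom p)
    | .top     => .bot
    | .bot     => .top
    | .neg φ   => nnf φ
    | .and φ ψ => .or (nnfNeg φ) (nnfNeg ψ)
    | .or φ ψ  => .and (nnfNeg φ) (nnfNeg ψ)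
    | .dia φ   => .box (nnfNeg φ)
    | .box φ   => .dia (nnfNeg φ)
end

/-- The subformulas of an NNF formula (with `SUBF(¬p) = {¬p}`). -/
def subf {α : Type} : ModalFormula α → Set (ModalFormula α)
  | .atom p  => {.atom p}
  | .top     => {.top}
  | .bot     => {.bot}
  | .neg φ   => {.neg φ}
  | .and φ ψ => subf φ ∪ subf ψ ∪ {.and φ ψ}
  | .or φ ψ  => subf φ ∪ subf ψ ∪ {.or φ ψ}
  | .dia φ   => subf φ ∪ {.dia φ}
  | .box φ   => subf φ ∪ {.box φ}

/-- A locally-consistent set of formulas. -/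
def LocallyConsistent {α : Type} (X : Set (ModalFormula α)) : Prop :=
  (∀ φ ψ : ModalFormula α, .and φ ψ ∈ X → φ ∈ X ∧ ψ ∈ X) ∧
  (∀ φ ψ : ModalFormula α, .or φ ψ ∈ X → φ ∈ X ∨ ψ ∈ X) ∧
  (.bot : ModalFormula α) ∉ X ∧
  (∀ p : α, ¬((.atom p : ModalFormula α) ∈ X ∧ (.neg (.atom p) : ModalFormula α) ∈ X))

/-- An L-type (relative to the fixed antecedent φ). -/
def IsLType {α : Type} (φ : ModalFormula α) (X : Set (ModalFormula α)) : Prop :=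
  X ⊆ subf (nnf φ) ∧ LocallyConsistent X

/-- An R-type (relative to the fixed consequent ψ). -/
def IsRType {α : Type} (ψ : ModalFormula α) (X : Set (ModalFormula α)) : Prop :=
  X ⊆ subf (nnf (.neg ψ)) ∧ LocallyConsistent X

/-- A combined type: a pair of an L-type and an R-type. -/
def IsType {α : Type} (φ ψ : ModalFormula α)
    (τ : Set (ModalFormula α) × Set (ModalFormula α)) : Prop :=
  IsLType φ τ.1 ∧ IsRType ψ τ.2

/-- Overlap-consistency of a combined type. -/
def OverlapConsistent {α : Type}
    (τ : Set (ModalFormula α) × Set (ModalFormula α)) : Prop :=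
  ∀ p : α,
    ¬((.atom p : ModalFormula α) ∈ τ.1 ∧ (.neg (.atom p) : ModalFormula α) ∈ τ.2) ∧
    ¬((.neg (.atom p) : ModalFormula α) ∈ τ.1 ∧ (.atom p : ModalFormula α) ∈ τ.2)

/-- Viable successor relation on combined types. -/
def TypeSucc {α : Type}
    (τ τ' : Set (ModalFormula α) × Set (ModalFormula α)) : Prop :=
  (∀ χ : ModalFormula α, .box χ ∈ τ.1 → χ ∈ τ'.1) ∧
  (∀ χ : ModalFormula α, .box χ ∈ τ.2 → χ ∈ τ'.2)

/-- A quasi-model for the pair (φ, ψ). -/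
def QuasiModel {α : Type} (φ ψ : ModalFormula α)
    (X : Set (Set (ModalFormula α) × Set (ModalFormula α))) : Prop :=
  (∀ τ ∈ X, IsType φ ψ τ) ∧
  (∀ τ ∈ X, OverlapConsistent τ) ∧
  (∀ τ ∈ X, ∀ χ : ModalFormula α,
    ((.dia χ : ModalFormula α) ∈ τ.1 → ∃ τ' ∈ X, TypeSucc τ τ' ∧ χ ∈ τ'.1) ∧
    ((.dia χ : ModalFormula α) ∈ τ.2 → ∃ τ' ∈ X, TypeSucc τ τ' ∧ χ ∈ τ'.2))

/-! The types realised at the worlds of a model satisfying `φ ∧ ¬ψ` (the true subformulas of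
`nnf φ` and of `nnf ¬ψ` at each world) form a quasi-model. Conversely, in the model whose worlds
are the types of a quasi-model and whose accessibility is `⇒`, labelling each type `τ` by
`τL ∪ τR` satisfies the Hintikka conditions, and every formula of a Hintikka label is true where
it occurs; overlap-consistency is exactly what makes `τL ∪ τR` locally consistent. -/

section
variable {α : Type}

theorem satisfies_nnf_and_nnfNeg (M : KripkeModel α) (χ : ModalFormula α) :
    ∀ w, (Satisfies M w (nnf χ) ↔ Satisfies M w χ) ∧
      (Satisfies M w (nnfNeg χ) ↔ ¬ Satisfies M w χ) := by
  induction χ <;> simp_all [nnf, nnfNeg, Satisfies, imp_iff_not_or]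

theorem satisfies_nnf (M : KripkeModel α) (w : M.World) (χ : ModalFormula α) :
    Satisfies M w (nnf χ) ↔ Satisfies M w χ :=
  (satisfies_nnf_and_nnfNeg M χ w).1

theorem neg_mem_subf_nnf_and_nnfNeg (χ : ModalFormula α) :
    (∀ θ, .neg θ ∈ subf (nnf χ) → ∃ p, θ = .atom p) ∧
      (∀ θ, .neg θ ∈ subf (nnfNeg χ) → ∃ p, θ = .atom p) := by
  induction χ <;> simp_all [nnf, nnfNeg, subf, or_imp]

theorem neg_mem_subf_nnf {χ θ : ModalFormula α} (h : .neg θ ∈ subf (nnf χ)) :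
    ∃ p, θ = .atom p :=
  (neg_mem_subf_nnf_and_nnfNeg χ).1 θ h

theorem mem_subf_self (χ : ModalFormula α) : χ ∈ subf χ := by
  cases χ <;> simp [subf]

theorem subf_subset_of_mem {θ χ : ModalFormula α} (h : χ ∈ subf θ) : subf χ ⊆ subf θ := by
  induction θ with
  | atom | top | bot | neg => simp only [subf, Set.mem_singleton_iff] at h; rw [h]
  | and a b iha ihb | or a b iha ihb =>
    simp only [subf, Set.mem_union, Set.mem_singleton_iff] at h ⊢
    rcases h with (h | h) | rfl
    · exact (iha h).trans fun x hx => .inl (.inl hx)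
    · exact (ihb h).trans fun x hx => .inl (.inr hx)
    · rfl
  | dia a ih | box a ih =>
    simp only [subf, Set.mem_union, Set.mem_singleton_iff] at h ⊢
    rcases h with h | rfl
    · exact (ih h).trans fun x hx => .inl hx
    · rfl

theorem mem_subf_of_and_mem_subf {θ a b : ModalFormula α} (h : .and a b ∈ subf θ) :
    a ∈ subf θ ∧ b ∈ subf θ :=
  ⟨subf_subset_of_mem h (.inl (.inl (mem_subf_self a))),
    subf_subset_of_mem h (.inl (.inr (mem_subf_self b)))⟩

theorem mem_subf_of_or_mem_subf {θ a b : ModalFormula α} (h : .or a b ∈ subf θ) :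
    a ∈ subf θ ∧ b ∈ subf θ :=
  ⟨subf_subset_of_mem h (.inl (.inl (mem_subf_self a))),
    subf_subset_of_mem h (.inl (.inr (mem_subf_self b)))⟩

theorem mem_subf_of_dia_mem_subf {θ a : ModalFormula α} (h : .dia a ∈ subf θ) : a ∈ subf θ :=
  subf_subset_of_mem h (.inl (mem_subf_self a))

theorem mem_subf_of_box_mem_subf {θ a : ModalFormula α} (h : .box a ∈ subf θ) : a ∈ subf θ :=
  subf_subset_of_mem h (.inl (mem_subf_self a))

def subfTrueAt (M : KripkeModel α) (θ : ModalFormula α) (w : M.World) : Set (ModalFormula α) :=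
  {χ | χ ∈ subf θ ∧ Satisfies M w χ}

theorem locallyConsistent_subfTrueAt (M : KripkeModel α) (θ : ModalFormula α) (w : M.World) :
    LocallyConsistent (subfTrueAt M θ w) := by
  refine ⟨?and, ?or, fun h => h.2, fun p ⟨hp, hnp⟩ => hnp.2 hp.2⟩
  case and =>
    rintro a b ⟨hs, ha, hb⟩
    obtain ⟨hsa, hsb⟩ := mem_subf_of_and_mem_subf hs
    exact ⟨⟨hsa, ha⟩, hsb, hb⟩
  case or =>
    rintro a b ⟨hs, hab⟩
    obtain ⟨hsa, hsb⟩ := mem_subf_of_or_mem_subf hs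
    exact hab.imp (⟨hsa, ·⟩) (⟨hsb, ·⟩)

theorem mem_subfTrueAt_of_box {M : KripkeModel α} {θ χ : ModalFormula α} {w v : M.World}
    (h : .box χ ∈ subfTrueAt M θ w) (hwv : M.R w v) : χ ∈ subfTrueAt M θ v :=
  ⟨mem_subf_of_box_mem_subf h.1, h.2 v hwv⟩

theorem exists_mem_subfTrueAt_of_dia {M : KripkeModel α} {θ χ : ModalFormula α} {w : M.World}
    (h : .dia χ ∈ subfTrueAt M θ w) : ∃ v, M.R w v ∧ χ ∈ subfTrueAt M θ v :=
  let ⟨v, hwv, hv⟩ := h.2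
  ⟨v, hwv, mem_subf_of_dia_mem_subf h.1, hv⟩

def typeOf (φ ψ : ModalFormula α) (M : KripkeModel α) (w : M.World) :
    Set (ModalFormula α) × Set (ModalFormula α) :=
  (subfTrueAt M (nnf φ) w, subfTrueAt M (nnf (.neg ψ)) w)

theorem typeSucc_typeOf {φ ψ : ModalFormula α} {M : KripkeModel α} {w v : M.World}
    (hwv : M.R w v) : TypeSucc (typeOf φ ψ M w) (typeOf φ ψ M v) :=
  ⟨fun _ h => mem_subfTrueAt_of_box h hwv, fun _ h => mem_subfTrueAt_of_box h hwv⟩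

theorem quasiModel_range_typeOf (φ ψ : ModalFormula α) (M : KripkeModel α) :
    QuasiModel φ ψ (Set.range (typeOf φ ψ M)) := by
  refine ⟨?type, ?overlap, ?dia⟩
  case type =>
    rintro _ ⟨w, rfl⟩
    exact ⟨⟨fun _ h => h.1, locallyConsistent_subfTrueAt ..⟩,
      ⟨fun _ h => h.1, locallyConsistent_subfTrueAt ..⟩⟩
  case overlap =>
    rintro _ ⟨w, rfl⟩ p
    exact ⟨fun ⟨hp, hnp⟩ => hnp.2 hp.2, fun ⟨hnp, hp⟩ => hnp.2 hp.2⟩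
  case dia =>
    rintro _ ⟨w, rfl⟩ χ
    constructor <;> intro h <;>
    · obtain ⟨v, hwv, hv⟩ := exists_mem_subfTrueAt_of_dia h
      exact ⟨_, ⟨v, rfl⟩, typeSucc_typeOf hwv, hv⟩

structure IsHintikkaLabelling (M : KripkeModel α) (L : M.World → Set (ModalFormula α)) :
    Prop where
  locallyConsistent : ∀ w, LocallyConsistent (L w)
  neg_mem : ∀ w θ, .neg θ ∈ L w → ∃ p, θ = .atom p
  mem_V_iff : ∀ w p, w ∈ M.V p ↔ .atom p ∈ L w
  box_mem : ∀ w v χ, .box χ ∈ L w → M.R w v → χ ∈ L v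
  dia_mem : ∀ w χ, .dia χ ∈ L w → ∃ v, M.R w v ∧ χ ∈ L v

theorem IsHintikkaLabelling.satisfies {M : KripkeModel α} {L : M.World → Set (ModalFormula α)}
    (hL : IsHintikkaLabelling M L) (χ : ModalFormula α) :
    ∀ w, χ ∈ L w → Satisfies M w χ := by
  induction χ with
  | atom p => exact fun w h => (hL.mem_V_iff w p).2 h
  | top => exact fun _ _ => trivial
  | bot => exact fun w h => (hL.locallyConsistent w).2.2.1 h
  | neg a =>
    intro w h
    obtain ⟨p, rfl⟩ := hL.neg_mem w a h
    exact fun hp => (hL.locallyConsistent w).2.2.2 p ⟨(hL.mem_V_iff w p).1 hp, h⟩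
  | and a b iha ihb =>
    intro w h
    obtain ⟨ha, hb⟩ := (hL.locallyConsistent w).1 a b h
    exact ⟨iha w ha, ihb w hb⟩
  | or a b iha ihb =>
    exact fun w h => ((hL.locallyConsistent w).2.1 a b h).imp (iha w) (ihb w)
  | dia a ih =>
    intro w h
    obtain ⟨v, hwv, hv⟩ := hL.dia_mem w a h
    exact ⟨v, hwv, ih v hv⟩
  | box a ih => exact fun w h v hwv => ih v (hL.box_mem w v a h hwv)

def kripkeModelOfTypes (X : Set (Set (ModalFormula α) × Set (ModalFormula α))) :
    KripkeModel α where
  World := X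
  R τ τ' := TypeSucc τ.1 τ'.1
  V p := {τ | .atom p ∈ τ.1.1 ∪ τ.1.2}

theorem LocallyConsistent.union_of_overlapConsistent {A B : Set (ModalFormula α)}
    (hA : LocallyConsistent A) (hB : LocallyConsistent B) (hAB : OverlapConsistent (A, B)) :
    LocallyConsistent (A ∪ B) := by
  refine ⟨?and, ?or, ?bot, ?atom⟩
  case and =>
    rintro a b (h | h)
    · exact (hA.1 a b h).imp .inl .inl
    · exact (hB.1 a b h).imp .inr .inr
  case or =>
    rintro a b (h | h)
    · exact (hA.2.1 a b h).imp .inl .inl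
    · exact (hB.2.1 a b h).imp .inr .inr
  case bot => rintro (h | h); exacts [hA.2.2.1 h, hB.2.2.1 h]
  case atom =>
    rintro p ⟨hp | hp, hnp | hnp⟩
    exacts [hA.2.2.2 p ⟨hp, hnp⟩, (hAB p).1 ⟨hp, hnp⟩, (hAB p).2 ⟨hnp, hp⟩, hB.2.2.2 p ⟨hp, hnp⟩]

theorem QuasiModel.isHintikkaLabelling {φ ψ : ModalFormula α}
    {X : Set (Set (ModalFormula α) × Set (ModalFormula α))} (hX : QuasiModel φ ψ X) :
    IsHintikkaLabelling (kripkeModelOfTypes X) fun τ => τ.1.1 ∪ τ.1.2 where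
  locallyConsistent τ :=
    have ⟨⟨_, hL⟩, _, hR⟩ := hX.1 τ.1 τ.2
    hL.union_of_overlapConsistent hR (hX.2.1 τ.1 τ.2)
  neg_mem τ θ := by
    rintro (h | h)
    exacts [neg_mem_subf_nnf ((hX.1 τ.1 τ.2).1.1 h), neg_mem_subf_nnf ((hX.1 τ.1 τ.2).2.1 h)]
  mem_V_iff _ _ := Iff.rfl
  box_mem _ _ χ := by
    rintro (h | h) hsucc
    exacts [.inl (hsucc.1 χ h), .inr (hsucc.2 χ h)]
  dia_mem τ χ := by
    rintro (h | h)
    · obtain ⟨τ', hτ', hsucc, hχ⟩ := (hX.2.2 τ.1 τ.2 χ).1 h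
      exact ⟨⟨τ', hτ'⟩, hsucc, .inl hχ⟩
    · obtain ⟨τ', hτ', hsucc, hχ⟩ := (hX.2.2 τ.1 τ.2 χ).2 h
      exact ⟨⟨τ', hτ'⟩, hsucc, .inr hχ⟩

end

/-- Soundness and completeness of quasi-models. -/
theorem quasi_model_soundness_completeness {α : Type} (φ ψ : ModalFormula α) :
    (∃ (M : KripkeModel α) (w : M.World), Satisfies M w (.and φ (.neg ψ))) ↔
    ∃ X, QuasiModel φ ψ X ∧
      ∃ τ ∈ X, nnf φ ∈ τ.1 ∧ nnf (.neg ψ) ∈ τ.2 := by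
  constructor
  · rintro ⟨M, w, hφ, hψ⟩
    refine ⟨_, quasiModel_range_typeOf φ ψ M, _, ⟨w, rfl⟩, ?_, ?_⟩
    · exact ⟨mem_subf_self _, (satisfies_nnf M w φ).2 hφ⟩
    · exact ⟨mem_subf_self _, (satisfies_nnf M w (.neg ψ)).2 hψ⟩
  · rintro ⟨X, hX, τ, hτ, hφ, hψ⟩
    have hsat := hX.isHintikkaLabelling.satisfies
    exact ⟨kripkeModelOfTypes X, ⟨τ, hτ⟩,
      (satisfies_nnf _ _ φ).1 (hsat _ _ (.inl hφ)),
      (satisfies_nnf _ _ (.neg ψ)).1 (hsat _ _ (.inr hψ))⟩
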